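/- Let σ be a permutation of Fin 4 and let f be the ℤ-linear endomorphism of the free ℤ-module with basis H, E₁,…,E₄ defined by f(H) = 3H − 2(E₁+E₂+E₃+E₄) and f(Eᵢ) = H − Σ_{j ≠ i} E_{σ(j)}. Then f is an automorphism of finite order, and its order equals lcm(2, ord(σ)), where ord(σ) is the order of σ; in particular the order of f belongs to {2, 4, 6}. -/

import Mathlib

/-!
Writing `S = E₁ + ⋯ + E₄`, the map is `f = P_σ ∘ c`, where `P_σ` permutes the `Eᵢ` and `c` is the
action of the standard cubic Cremona involution, `H ↦ 3H - 2S`, `Eᵢ ↦ H - S + Eᵢ`. The two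
factors commute, `c` has order 2 and no `P_τ` equals `c` (it fixes `H`), so the order of the
product is `lcm(ord σ, 2)`. Every element of `S₄` has order 1, 2, 3 or 4.
-/

noncomputable section

/-- Index type for the basis `H, E₁,…,E₄`. -/
abbrev IdxB := Unit ⊕ Fin 4

/-- The free ℤ-module with basis `H, E₁,…,E₄`. -/
abbrev ModB := IdxB → ℤ

/-- The basis vector `H` (pullback of the hyperplane class). -/
def Hc : ModB := Pi.single (Sum.inl ()) 1

/-- The basis vectors `Eᵢ` (exceptional divisors over the coordinate points). -/
def Ec (i : Fin 4) : ModB := Pi.single (Sum.inr i) 1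

theorem Commute.orderOf_mul_eq_lcm_two {G : Type*} [Monoid G] {x y : G} (h : Commute x y)
    (hy : orderOf y = 2) (hxy : ∀ n, x ^ n ≠ y) : orderOf (x * y) = Nat.lcm (orderOf x) 2 := by
  refine Nat.dvd_antisymm (hy ▸ h.orderOf_mul_dvd_lcm) ?_
  set n := orderOf (x * y)
  have hn : x ^ n * y ^ n = 1 := by rw [← h.mul_pow, pow_orderOf_eq_one]
  have hyn : y ^ n = 1 := by
    rw [← pow_mod_orderOf, hy]
    rcases Nat.mod_two_eq_zero_or_one n with h0 | h1
    · rw [h0, pow_zero]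
    · rw [← pow_mod_orderOf y, hy, h1, pow_one] at hn
      refine absurd ?_ (hxy n)
      rw [← mul_one (x ^ n), ← pow_orderOf_eq_one y, hy, sq, ← mul_assoc, hn, one_mul]
  rw [hyn, mul_one] at hn
  exact Nat.lcm_dvd (orderOf_dvd_of_pow_eq_one hn) (hy ▸ orderOf_dvd_of_pow_eq_one hyn)

set_option maxRecDepth 10000 in
theorem Equiv.Perm.lcm_two_orderOf_mem (σ : Equiv.Perm (Fin 4)) :
    Nat.lcm 2 (orderOf σ) ∈ ({2, 4, 6} : Set ℕ) := by
  have h46 : σ ^ 4 = 1 ∨ σ ^ 6 = 1 := by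
    revert σ
    decide
  have hd : orderOf σ ∣ 4 ∨ orderOf σ ∣ 6 :=
    h46.imp orderOf_dvd_of_pow_eq_one orderOf_dvd_of_pow_eq_one
  have hle : orderOf σ ≤ 6 := by
    obtain hd | hd := hd
    exacts [(Nat.le_of_dvd four_pos hd).trans (by norm_num), Nat.le_of_dvd (by norm_num) hd]
  interval_cases orderOf σ <;> simp_all [Nat.lcm]

theorem basisFun_inl : Pi.basisFun ℤ IdxB (Sum.inl ()) = Hc := Pi.basisFun_apply ..

theorem basisFun_inr (i : Fin 4) : Pi.basisFun ℤ IdxB (Sum.inr i) = Ec i := Pi.basisFun_apply ..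

theorem ModB.end_ext {f g : Module.End ℤ ModB} (hH : f Hc = g Hc) (hE : ∀ i, f (Ec i) = g (Ec i)) :
    f = g := by
  refine (Pi.basisFun ℤ IdxB).ext ?_
  rintro (⟨⟩ | i)
  exacts [basisFun_inl ▸ hH, basisFun_inr i ▸ hE i]

theorem sum_Ec_comp_perm (τ : Equiv.Perm (Fin 4)) : ∑ j, Ec (τ j) = ∑ j, Ec j :=
  Equiv.sum_comp τ Ec

theorem Ec_injective : Function.Injective Ec := by
  intro a b h
  simpa [Ec, Pi.single_apply, eq_comm] using congrFun h (Sum.inr a)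

def permOp : Equiv.Perm (Fin 4) →* Module.End ℤ ModB where
  toFun τ := LinearMap.funLeft ℤ ℤ (Sum.map id ⇑τ⁻¹)
  map_one' := by
    ext v x
    cases x <;> simp [LinearMap.funLeft_apply]
  map_mul' τ₁ τ₂ := by
    ext v x
    cases x <;> simp [LinearMap.funLeft_apply, Module.End.mul_apply]

theorem permOp_Hc (τ : Equiv.Perm (Fin 4)) : permOp τ Hc = Hc := by
  ext (⟨⟩ | j) <;> simp [permOp, LinearMap.funLeft_apply, Hc]

theorem permOp_Ec (τ : Equiv.Perm (Fin 4)) (i : Fin 4) : permOp τ (Ec i) = Ec (τ i) := by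
  ext (⟨⟩ | j)
  · simp [permOp, LinearMap.funLeft_apply, Ec]
  · simp only [permOp, MonoidHom.coe_mk, OneHom.coe_mk, LinearMap.funLeft_apply, Sum.map_inr, Ec,
      Pi.single_apply, Sum.inr.injEq, Equiv.Perm.inv_def, Equiv.symm_apply_eq]

theorem permOp_sum_Ec (τ : Equiv.Perm (Fin 4)) : permOp τ (∑ j, Ec j) = ∑ j, Ec j := by
  simp only [map_sum, permOp_Ec, sum_Ec_comp_perm]

theorem permOp_injective : Function.Injective permOp := by
  refine (injective_iff_map_eq_one permOp).mpr fun τ hτ => Equiv.ext fun i => Ec_injective ?_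
  simpa [permOp_Ec] using LinearMap.congr_fun hτ (Ec i)

theorem orderOf_permOp (τ : Equiv.Perm (Fin 4)) : orderOf (permOp τ) = orderOf τ :=
  orderOf_injective permOp permOp_injective τ

def cremona : Module.End ℤ ModB :=
  (Pi.basisFun ℤ IdxB).constr ℤ
    (Sum.elim (fun _ => 3 • Hc - 2 • ∑ j, Ec j) fun i => Hc - ∑ j, Ec j + Ec i)

theorem cremona_Hc : cremona Hc = 3 • Hc - 2 • ∑ j, Ec j := by
  rw [cremona, ← basisFun_inl, Module.Basis.constr_basis, Sum.elim_inl, basisFun_inl]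

theorem cremona_Ec (i : Fin 4) : cremona (Ec i) = Hc - ∑ j, Ec j + Ec i := by
  rw [cremona, ← basisFun_inr, Module.Basis.constr_basis, Sum.elim_inr, basisFun_inr]

theorem cremona_sum_Ec : cremona (∑ j, Ec j) = 4 • Hc - 3 • ∑ j, Ec j := by
  simp only [map_sum, cremona_Ec, Finset.sum_add_distrib, Finset.sum_sub_distrib,
    Finset.sum_const, Finset.card_univ, Fintype.card_fin]
  module

theorem cremona_mul_self : cremona * cremona = 1 := by
  refine ModB.end_ext ?_ fun i => ?_ <;>
    simp only [Module.End.mul_apply, Module.End.one_apply, cremona_Hc, cremona_Ec, map_add,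
      map_sub, map_nsmul, cremona_sum_Ec] <;>
    module

theorem orderOf_cremona : orderOf cremona = 2 := by
  refine orderOf_eq_prime (sq cremona ▸ cremona_mul_self) fun h => ?_
  have hH := congrFun (LinearMap.congr_fun h Hc) (Sum.inl ())
  rw [cremona_Hc, Module.End.one_apply] at hH
  simp [Hc, Ec, Fin.sum_univ_four] at hH

theorem permOp_ne_cremona (τ : Equiv.Perm (Fin 4)) : permOp τ ≠ cremona := by
  intro h
  have hH := congrFun (LinearMap.congr_fun h Hc) (Sum.inl ())
  rw [cremona_Hc, permOp_Hc] at hH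
  simp [Hc, Ec, Fin.sum_univ_four] at hH

theorem commute_permOp_cremona (τ : Equiv.Perm (Fin 4)) : Commute (permOp τ) cremona := by
  refine ModB.end_ext ?_ fun i => ?_ <;>
    simp only [Module.End.mul_apply, cremona_Hc, cremona_Ec, map_add, map_sub, map_nsmul,
      permOp_Hc, permOp_Ec, permOp_sum_Ec]

theorem eq_permOp_mul_cremona (σ : Equiv.Perm (Fin 4)) (f : Module.End ℤ ModB)
    (hH : f Hc = 3 • Hc - 2 • ∑ j : Fin 4, Ec j)
    (hE : ∀ i : Fin 4, f (Ec i) = Hc - ∑ j ∈ Finset.univ.filter (· ≠ i), Ec (σ j)) :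
    f = permOp σ * cremona := by
  refine ModB.end_ext ?_ fun i => ?_ <;>
    simp only [Module.End.mul_apply, cremona_Hc, cremona_Ec, map_add, map_sub, map_nsmul,
      permOp_Hc, permOp_Ec, permOp_sum_Ec, hH, hE]
  rw [Finset.filter_ne', Finset.sum_erase_eq_sub (Finset.mem_univ i), sum_Ec_comp_perm]
  abel

/-- The action on cohomology of a map `Φ = g∘crem₃` with `g` of type (B) is an
automorphism of finite order, equal to `lcm(2, ord σ)`; in particular its order belongs
to `{2, 4, 6}`. -/
theorem typeB_order (σ : Equiv.Perm (Fin 4)) (f : Module.End ℤ ModB)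
    (hH : f Hc = 3 • Hc - 2 • ∑ j : Fin 4, Ec j)
    (hE : ∀ i : Fin 4, f (Ec i) = Hc - ∑ j ∈ Finset.univ.filter (· ≠ i), Ec (σ j)) :
    IsUnit f ∧ orderOf f = Nat.lcm 2 (orderOf σ) ∧ orderOf f ∈ ({2, 4, 6} : Set ℕ) := by
  have hord : orderOf f = Nat.lcm 2 (orderOf σ) := by
    rw [eq_permOp_mul_cremona σ f hH hE,
      (commute_permOp_cremona σ).orderOf_mul_eq_lcm_two orderOf_cremona
        fun n => map_pow permOp σ n ▸ permOp_ne_cremona _,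
      orderOf_permOp, Nat.lcm_comm]
  have hfin : IsOfFinOrder f := orderOf_pos_iff.mp (hord ▸ Nat.lcm_pos two_pos (orderOf_pos σ))
  exact ⟨hfin.isUnit, hord, hord ▸ σ.lcm_two_orderOf_mem⟩
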